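/- arXiv:2602.14727 — 5 statements merged into one kernel-verified Lean document; each statement's English description precedes it below -/
import Mathlib

section
/- Let c₁ ≥ c₂ > 0. The function s ↦ K_{3/2}(c₁ s)/K_{1/2}(c₂ s) = sqrt(c₂/c₁) · exp(−(c₁ − c₂) s) · (1 + 1/(c₁ s)) is completely monotonic on (0, ∞). -/
open Real MeasureTheory Set

/-- Modified Bessel function of the second kind (Macdonald function). -/
noncomputable def besselK (ν x : ℝ) : ℝ :=
  ∫ t in Set.Ioi (0 : ℝ), Real.exp (-x * Real.cosh t) * Real.cosh (ν * t)

/-- A function is completely monotonic on `(0,∞)` if it is `C^∞` there and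
`(-1)^n f^{(n)}(x) ≥ 0` for all `x > 0` and all `n ≥ 0`. -/
def CompletelyMonotonic (f : ℝ → ℝ) : Prop :=
  ContDiffOn ℝ (⊤ : ℕ∞) f (Set.Ioi 0) ∧
    ∀ n : ℕ, ∀ x ∈ Set.Ioi (0 : ℝ),
      0 ≤ (-1 : ℝ) ^ n * iteratedDerivWithin n f (Set.Ioi 0) x

section Aux

open Filter Asymptotics

lemma image_two_arsinh : (fun u : ℝ => 2 * arsinh u) '' Ioi 0 = Ioi 0 := by
  ext t
  simp only [mem_image, mem_Ioi]
  constructor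
  · rintro ⟨u, hu, rfl⟩
    have : 0 < arsinh u := Real.arsinh_pos_iff.2 hu
    linarith
  · intro ht
    exact ⟨Real.sinh (t / 2), Real.sinh_pos_iff.2 (by linarith),
      by rw [Real.arsinh_sinh]; ring⟩

lemma besselK_sub (ν x : ℝ) :
    besselK ν x = ∫ u in Ioi (0 : ℝ),
      (2 * (Real.sqrt (1 + u ^ 2))⁻¹) *
        (Real.exp (-x * (1 + 2 * u ^ 2)) * Real.cosh (ν * (2 * arsinh u))) := by
  have hderiv : ∀ u ∈ Ioi (0:ℝ), HasDerivWithinAt (fun u : ℝ => 2 * arsinh u)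
      (2 * (Real.sqrt (1 + u ^ 2))⁻¹) (Ioi 0) u := fun u _ =>
    ((Real.hasDerivAt_arsinh u).const_mul 2).hasDerivWithinAt
  have hinj : InjOn (fun u : ℝ => 2 * arsinh u) (Ioi 0) := fun a _ b _ h => by
    simp only at h
    exact Real.arsinh_injective (by linarith)
  have key := integral_image_eq_integral_abs_deriv_smul (measurableSet_Ioi)
    hderiv hinj (fun t => Real.exp (-x * Real.cosh t) * Real.cosh (ν * t))
  rw [image_two_arsinh] at key
  rw [besselK, key]
  apply setIntegral_congr_fun measurableSet_Ioi
  intro u hu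
  have h1 : (0:ℝ) < Real.sqrt (1 + u ^ 2) := Real.sqrt_pos.2 (by positivity)
  have hcosh : Real.cosh (2 * arsinh u) = 1 + 2 * u ^ 2 := by
    rw [Real.cosh_two_mul, Real.cosh_sq, Real.sinh_arsinh]; ring
  simp only [smul_eq_mul, hcosh]
  rw [abs_of_pos (by positivity)]

lemma gauss_moment {a : ℝ} (ha : 0 < a) :
    ∫ u in Ioi (0:ℝ), u ^ 2 * Real.exp (-a * u ^ 2) = Real.sqrt (π / a) / (4 * a) := by
  have hint2 : IntegrableOn (fun u : ℝ => u ^ 2 * Real.exp (-a * u ^ 2)) (Ioi 0) := by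
    have := integrableOn_rpow_mul_exp_neg_mul_sq ha (by norm_num : (-1:ℝ) < 2)
    refine this.congr_fun (fun u hu => ?_) measurableSet_Ioi
    rw [← Real.rpow_natCast u 2]; norm_num
  have hint0 : IntegrableOn (fun u : ℝ => Real.exp (-a * u ^ 2) / (2 * a)) (Ioi 0) :=
    ((integrable_exp_neg_mul_sq ha).integrableOn).div_const _
  have hderiv : ∀ u ∈ Ioi (0:ℝ), HasDerivAt (fun u : ℝ => -(u * Real.exp (-a * u ^ 2)) / (2 * a))
      (u ^ 2 * Real.exp (-a * u ^ 2) - Real.exp (-a * u ^ 2) / (2 * a)) u := by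
    intro u _
    have h1 : HasDerivAt (fun u : ℝ => -a * u ^ 2) (-a * (2 * u)) u := by
      simpa using ((hasDerivAt_pow 2 u).const_mul (-a))
    have h2 : HasDerivAt (fun u : ℝ => Real.exp (-a * u ^ 2))
        (Real.exp (-a * u ^ 2) * (-a * (2*u))) u := h1.exp
    have h3 := (hasDerivAt_id' u).mul h2
    have h4 : HasDerivAt (fun u : ℝ => -(u * Real.exp (-a * u ^ 2)) / (2 * a)) _ u :=
      (h3.neg).div_const (2 * a)
    convert h4 using 1
    field_simp
    ring
  have htend : Tendsto (fun u : ℝ => -(u * Real.exp (-a * u ^ 2)) / (2 * a)) atTop (nhds 0) := by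
    have hlo := rpow_mul_exp_neg_mul_sq_isLittleO_exp_neg ha 1
    have hlo' : (fun u : ℝ => u * Real.exp (-a * u ^ 2)) =o[atTop]
        fun x => Real.exp (-(1/2) * x) := by
      refine hlo.congr' ?_ EventuallyEq.rfl
      filter_upwards [eventually_ge_atTop (0:ℝ)] with u hu
      rw [Real.rpow_one]
    have h0 : Tendsto (fun x : ℝ => Real.exp (-(1/2) * x)) atTop (nhds 0) := by
      have h2 : Tendsto (fun x : ℝ => (1/2 : ℝ) * x) atTop atTop :=
        tendsto_id.const_mul_atTop (by norm_num)
      refine (tendsto_exp_neg_atTop_nhds_zero.comp h2).congr fun x => ?_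
      simp [Function.comp, neg_mul]
    have := hlo'.isBigO.trans_tendsto h0
    have := (this.neg).div_const (2 * a)
    simpa using this
  have key := integral_Ioi_of_hasDerivAt_of_tendsto
    (f := fun u : ℝ => -(u * Real.exp (-a * u ^ 2)) / (2 * a))
    (Continuous.continuousWithinAt (by fun_prop)) hderiv (hint2.sub hint0) htend
  simp only [zero_mul, neg_zero, zero_div, sub_zero] at key
  have hsplit : ∫ u in Ioi (0:ℝ), (u ^ 2 * Real.exp (-a * u ^ 2) - Real.exp (-a * u ^ 2) / (2 * a))
      = (∫ u in Ioi (0:ℝ), u ^ 2 * Real.exp (-a * u ^ 2))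
        - ∫ u in Ioi (0:ℝ), Real.exp (-a * u ^ 2) / (2 * a) :=
    integral_sub hint2 hint0
  have hg : ∫ u in Ioi (0:ℝ), Real.exp (-a * u ^ 2) / (2 * a)
      = Real.sqrt (π / a) / 2 / (2 * a) := by
    rw [integral_div, integral_gaussian_Ioi]
  rw [hsplit, hg] at key
  have : (∫ u in Ioi (0:ℝ), u ^ 2 * Real.exp (-a * u ^ 2))
      = Real.sqrt (π / a) / 2 / (2 * a) := by linarith
  rw [this]; ring

lemma cosh_three_mul' (θ : ℝ) :
    Real.cosh (3 * θ) = Real.cosh θ * (4 * Real.sinh θ ^ 2 + 1) := by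
  have h3 : (3:ℝ) * θ = 2 * θ + θ := by ring
  rw [h3, Real.cosh_add, Real.cosh_two_mul, Real.sinh_two_mul, Real.cosh_sq]
  ring

lemma besselK_half {x : ℝ} (hx : 0 < x) :
    besselK (1/2) x = Real.sqrt (π / (2 * x)) * Real.exp (-x) := by
  rw [besselK_sub]
  have hEq : ∀ u : ℝ, (2 * (Real.sqrt (1 + u ^ 2))⁻¹) *
        (Real.exp (-x * (1 + 2 * u ^ 2)) * Real.cosh ((1/2) * (2 * arsinh u)))
      = (2 * Real.exp (-x)) * Real.exp (-(2*x) * u ^ 2) := by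
    intro u
    have hs : Real.sqrt (1 + u ^ 2) ≠ 0 := ne_of_gt (Real.sqrt_pos.2 (by positivity))
    have h1 : (1/2 : ℝ) * (2 * arsinh u) = arsinh u := by ring
    rw [h1, Real.cosh_arsinh]
    rw [show -x * (1 + 2 * u ^ 2) = -x + -(2*x) * u ^ 2 by ring, Real.exp_add]
    field_simp
  simp only [hEq]
  rw [integral_const_mul, integral_gaussian_Ioi]
  ring

lemma besselK_threehalf {x : ℝ} (hx : 0 < x) :
    besselK (3/2) x = Real.sqrt (π / (2 * x)) * Real.exp (-x) * (1 + 1/x) := by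
  rw [besselK_sub]
  have h2x : (0:ℝ) < 2 * x := by linarith
  have hEq : ∀ u : ℝ, (2 * (Real.sqrt (1 + u ^ 2))⁻¹) *
        (Real.exp (-x * (1 + 2 * u ^ 2)) * Real.cosh ((3/2) * (2 * arsinh u)))
      = (8 * Real.exp (-x)) * (u ^ 2 * Real.exp (-(2*x) * u ^ 2))
        + (2 * Real.exp (-x)) * Real.exp (-(2*x) * u ^ 2) := by
    intro u
    have hs : Real.sqrt (1 + u ^ 2) ≠ 0 := ne_of_gt (Real.sqrt_pos.2 (by positivity))
    have h1 : (3/2 : ℝ) * (2 * arsinh u) = 3 * arsinh u := by ring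
    rw [h1, cosh_three_mul', Real.cosh_arsinh, Real.sinh_arsinh]
    rw [show -x * (1 + 2 * u ^ 2) = -x + -(2*x) * u ^ 2 by ring, Real.exp_add]
    field_simp
    ring
  simp only [hEq]
  have hint2 : IntegrableOn (fun u : ℝ => u ^ 2 * Real.exp (-(2*x) * u ^ 2)) (Ioi 0) := by
    have := integrableOn_rpow_mul_exp_neg_mul_sq h2x (by norm_num : (-1:ℝ) < 2)
    refine this.congr_fun (fun u hu => ?_) measurableSet_Ioi
    rw [← Real.rpow_natCast u 2]; norm_num
  have hint0 : IntegrableOn (fun u : ℝ => Real.exp (-(2*x) * u ^ 2)) (Ioi 0) :=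
    (integrable_exp_neg_mul_sq h2x).integrableOn
  rw [integral_add ((hint2.const_mul _)) (hint0.const_mul _), integral_const_mul,
    integral_const_mul, gauss_moment h2x, integral_gaussian_Ioi]
  have hxne : x ≠ 0 := ne_of_gt hx
  field_simp
  ring

noncomputable def coefs (A B b : ℝ) : ℕ → ℕ → ℝ
  | 0, 0 => A
  | 0, 1 => B
  | 0, _+2 => 0
  | n+1, j => b * coefs A B b n j + ((j - 1 : ℕ) : ℝ) * coefs A B b n (j - 1)

lemma coefs_nonneg {A B b : ℝ} (hA : 0 ≤ A) (hB : 0 ≤ B) (hb : 0 ≤ b) :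
    ∀ n j, 0 ≤ coefs A B b n j := by
  intro n
  induction n with
  | zero => intro j; match j with
    | 0 => exact hA
    | 1 => exact hB
    | j+2 => exact le_refl 0
  | succ n ih =>
    intro j
    simp only [coefs]
    have := ih j
    have := ih (j-1)
    positivity

lemma coefs_eq_zero {A B b : ℝ} : ∀ n j, n + 2 ≤ j → coefs A B b n j = 0 := by
  intro n
  induction n with
  | zero => intro j hj; match j, hj with
    | j+2, _ => rfl
  | succ n ih =>
    intro j hj
    match j, hj with
    | j+3, hj =>
      simp only [coefs, show j+3-1 = j+2 from rfl, ih (j+3) (by omega), ih (j+2) (by omega)]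
      ring

lemma hasDerivAt_term (c b : ℝ) (k : ℕ) {s : ℝ} (hs : s ≠ 0) :
    HasDerivAt (fun s : ℝ => c * Real.exp (-b * s) * (s⁻¹) ^ k)
      (-(b * (c * Real.exp (-b * s) * (s⁻¹) ^ k)
        + (k : ℝ) * (c * Real.exp (-b * s) * (s⁻¹) ^ (k+1)))) s := by
  have hexp : HasDerivAt (fun s : ℝ => Real.exp (-b * s)) (Real.exp (-b * s) * (-b * 1)) s :=
    ((hasDerivAt_id s).const_mul (-b)).exp
  have hpow : HasDerivAt (fun s : ℝ => (s⁻¹) ^ k)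
      ((k : ℝ) * (s⁻¹) ^ (k - 1) * -(s ^ 2)⁻¹) s := (hasDerivAt_inv hs).pow k
  have h : HasDerivAt (fun s : ℝ => c * Real.exp (-b * s) * (s⁻¹) ^ k) _ s :=
    (hexp.const_mul c).mul hpow
  convert h using 1
  rcases k with _ | m
  · simp; ring
  · simp only [Nat.add_sub_cancel, inv_pow]
    field_simp
    ring

lemma iter_F {A B b : ℝ} : ∀ n : ℕ, ∀ s ∈ Ioi (0:ℝ),
    iteratedDeriv n (fun s : ℝ => A * Real.exp (-b * s) + B * (Real.exp (-b * s) * s⁻¹)) s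
      = (-1) ^ n * ∑ k ∈ Finset.range (n + 2),
          coefs A B b n k * Real.exp (-b * s) * (s⁻¹) ^ k := by
  intro n
  induction n with
  | zero =>
    intro s hs
    rw [iteratedDeriv_zero]
    simp [Finset.sum_range_succ, coefs]
    ring
  | succ n ih =>
    intro s hs
    rw [iteratedDeriv_succ]
    have hEv : iteratedDeriv n (fun s : ℝ => A * Real.exp (-b * s) + B * (Real.exp (-b * s) * s⁻¹))
        =ᶠ[nhds s] fun s => (-1) ^ n * ∑ k ∈ Finset.range (n + 2),
          coefs A B b n k * Real.exp (-b * s) * (s⁻¹) ^ k := by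
      filter_upwards [isOpen_Ioi.mem_nhds hs] with t ht using ih t ht
    rw [hEv.deriv_eq]
    have hs0 : s ≠ 0 := ne_of_gt hs
    have hsum : HasDerivAt (fun s : ℝ => ∑ k ∈ Finset.range (n + 2),
        coefs A B b n k * Real.exp (-b * s) * (s⁻¹) ^ k)
        (∑ k ∈ Finset.range (n + 2),
          -(b * (coefs A B b n k * Real.exp (-b * s) * (s⁻¹) ^ k)
            + (k : ℝ) * (coefs A B b n k * Real.exp (-b * s) * (s⁻¹) ^ (k+1)))) s :=
      HasDerivAt.fun_sum fun k _ => hasDerivAt_term _ b k hs0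
    rw [(hsum.const_mul ((-1:ℝ) ^ n)).deriv]
    have hX : ∑ j ∈ Finset.range (n + 3),
        coefs A B b (n+1) j * Real.exp (-b * s) * (s⁻¹) ^ j
        = ∑ k ∈ Finset.range (n + 2),
          (b * (coefs A B b n k * Real.exp (-b * s) * (s⁻¹) ^ k)
            + (k : ℝ) * (coefs A B b n k * Real.exp (-b * s) * (s⁻¹) ^ (k+1))) := by
      have hterm : ∀ j, coefs A B b (n+1) j * Real.exp (-b * s) * (s⁻¹) ^ j
          = b * (coefs A B b n j * Real.exp (-b * s) * (s⁻¹) ^ j)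
            + ((j - 1 : ℕ) : ℝ) * (coefs A B b n (j-1) * Real.exp (-b * s) * (s⁻¹) ^ j) := by
        intro j; simp only [coefs]; ring
      simp only [hterm]
      rw [Finset.sum_add_distrib, Finset.sum_add_distrib]
      congr 1
      · rw [Finset.sum_range_succ, coefs_eq_zero n (n+2) le_rfl]
        simp
      · rw [Finset.sum_range_succ']
        simp
    rw [show (n:ℕ) + 1 + 2 = n + 3 from rfl, hX, Finset.sum_neg_distrib]
    ring

end Aux

theorem besselK_ratio_three_half_completelyMonotonic (c₁ c₂ : ℝ) (hc₂ : 0 < c₂) (hc : c₂ ≤ c₁) :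
    (∀ s : ℝ, 0 < s →
      besselK (3/2) (c₁ * s) / besselK (1/2) (c₂ * s)
        = Real.sqrt (c₂ / c₁) * Real.exp (-((c₁ - c₂) * s)) * (1 + 1 / (c₁ * s))) ∧
    CompletelyMonotonic (fun s => besselK (3/2) (c₁ * s) / besselK (1/2) (c₂ * s)) := by
  have hc₁ : 0 < c₁ := lt_of_lt_of_le hc₂ hc
  have hpart1 : ∀ s : ℝ, 0 < s →
      besselK (3/2) (c₁ * s) / besselK (1/2) (c₂ * s)
        = Real.sqrt (c₂ / c₁) * Real.exp (-((c₁ - c₂) * s)) * (1 + 1 / (c₁ * s)) := by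
    intro s hs
    rw [besselK_threehalf (mul_pos hc₁ hs), besselK_half (mul_pos hc₂ hs)]
    have h1 : Real.sqrt (π / (2 * (c₁ * s)))
        = Real.sqrt (c₂ / c₁) * Real.sqrt (π / (2 * (c₂ * s))) := by
      rw [← Real.sqrt_mul (by positivity : (0:ℝ) ≤ c₂ / c₁)]
      congr 1
      field_simp
    have h2 : Real.exp (-(c₁ * s)) = Real.exp (-((c₁ - c₂) * s)) * Real.exp (-(c₂ * s)) := by
      rw [← Real.exp_add]; congr 1; ring
    have hden : Real.sqrt (π / (2 * (c₂ * s))) * Real.exp (-(c₂ * s)) ≠ 0 := by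
      have : (0:ℝ) < Real.sqrt (π / (2 * (c₂ * s))) :=
        Real.sqrt_pos.2 (by positivity)
      positivity
    rw [h1, h2]
    field_simp
  refine ⟨hpart1, ?_, ?_⟩
  · -- smoothness
    set A := Real.sqrt (c₂ / c₁)
    have hF : ContDiffOn ℝ (⊤ : ℕ∞)
        (fun s : ℝ => A * Real.exp (-(c₁ - c₂) * s)
          + (A * c₁⁻¹) * (Real.exp (-(c₁ - c₂) * s) * s⁻¹)) (Ioi 0) := by
      have hexp : ContDiff ℝ (⊤ : ℕ∞) (fun s : ℝ => Real.exp (-(c₁ - c₂) * s)) :=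
        (contDiff_const.mul contDiff_id).exp
      have hinv : ContDiffOn ℝ (⊤ : ℕ∞) (fun s : ℝ => s⁻¹) (Ioi 0) :=
        contDiffOn_id.inv fun x hx => ne_of_gt hx
      exact ((contDiff_const.mul hexp).contDiffOn).add
        (contDiffOn_const.mul (hexp.contDiffOn.mul hinv))
    refine hF.congr fun s hs => ?_
    rw [hpart1 s hs]
    have hs0 : s ≠ 0 := ne_of_gt hs
    have hc₁0 : c₁ ≠ 0 := ne_of_gt hc₁
    rw [show -(c₁ - c₂) * s = -((c₁ - c₂) * s) by ring]
    field_simp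
  · -- sign condition
    intro n x hx
    have hEq : Set.EqOn (fun s => besselK (3/2) (c₁ * s) / besselK (1/2) (c₂ * s))
        (fun s : ℝ => Real.sqrt (c₂ / c₁) * Real.exp (-(c₁ - c₂) * s)
          + (Real.sqrt (c₂ / c₁) * c₁⁻¹) * (Real.exp (-(c₁ - c₂) * s) * s⁻¹)) (Ioi 0) := by
      intro s hs
      simp only
      rw [hpart1 s hs]
      have hs0 : s ≠ 0 := ne_of_gt hs
      have hc₁0 : c₁ ≠ 0 := ne_of_gt hc₁
      rw [show -(c₁ - c₂) * s = -((c₁ - c₂) * s) by ring]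
      field_simp
    rw [iteratedDerivWithin_congr hEq hx]
    have hopen : iteratedDerivWithin n
        (fun s : ℝ => Real.sqrt (c₂ / c₁) * Real.exp (-(c₁ - c₂) * s)
          + (Real.sqrt (c₂ / c₁) * c₁⁻¹) * (Real.exp (-(c₁ - c₂) * s) * s⁻¹)) (Ioi 0) x
        = iteratedDeriv n
        (fun s : ℝ => Real.sqrt (c₂ / c₁) * Real.exp (-(c₁ - c₂) * s)
          + (Real.sqrt (c₂ / c₁) * c₁⁻¹) * (Real.exp (-(c₁ - c₂) * s) * s⁻¹)) x := by
      rw [iteratedDerivWithin, iteratedDeriv, iteratedFDerivWithin_of_isOpen n isOpen_Ioi hx]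
    rw [hopen, iter_F n x hx, ← mul_assoc, ← mul_pow]
    norm_num
    refine Finset.sum_nonneg fun k _ => ?_
    have h1 := coefs_nonneg (Real.sqrt_nonneg (c₂ / c₁))
      (mul_nonneg (Real.sqrt_nonneg (c₂ / c₁)) (le_of_lt (inv_pos.2 hc₁)))
      (by linarith : (0:ℝ) ≤ c₁ - c₂) n k
    have hx0 : (0:ℝ) < x := hx
    positivity
end

section
/- If g : (0,∞) → ℝ is completely monotonic with finite limit g(0⁺) at 0, D ≥ g(0⁺), μ ≥ 0, and D − g(x) > 0 for all x > 0, then the function x ↦ (D − g(x))^{−μ} is completely monotonic on (0,∞). -/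
open Real Set Filter Topology

lemma iDW_open {f : ℝ → ℝ} {s : Set ℝ} (hs : IsOpen s) {x : ℝ} (hx : x ∈ s) (n : ℕ) :
    iteratedDerivWithin n f s x = iteratedDeriv n f x := by
  rw [iteratedDerivWithin_eq_iteratedFDerivWithin, iteratedDeriv_eq_iteratedFDeriv,
    iteratedFDerivWithin_of_isOpen n hs hx]

lemma hasDerivAt_iter {s : Set ℝ} (hs : IsOpen s) {f : ℝ → ℝ}
    (hf : ContDiffOn ℝ (⊤ : ℕ∞) f s) (k : ℕ) {x : ℝ} (hx : x ∈ s) :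
    HasDerivAt (iteratedDeriv k f) (iteratedDeriv (k+1) f x) x := by
  have h1 : DifferentiableOn ℝ (iteratedDerivWithin k f s) s :=
    hf.differentiableOn_iteratedDerivWithin (by exact_mod_cast lt_top_iff_ne_top.mpr (by simp))
      hs.uniqueDiffOn
  have h2 : DifferentiableAt ℝ (iteratedDerivWithin k f s) x :=
    (h1 x hx).differentiableAt (hs.mem_nhds hx)
  have hev : iteratedDerivWithin k f s =ᶠ[𝓝 x] iteratedDeriv k f := by
    filter_upwards [hs.mem_nhds hx] with y hy using iDW_open hs hy k
  have h3 : DifferentiableAt ℝ (iteratedDeriv k f) x := h2.congr_of_eventuallyEq hev.symm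
  have := h3.hasDerivAt
  rwa [← iteratedDeriv_succ] at this

lemma binom_step (n : ℕ) (A : ℕ → ℕ → ℝ) :
    ∑ k ∈ Finset.range (n+1), (n.choose k : ℝ) * (A (k+1) (n-k) + A k (n-k+1))
      = ∑ k ∈ Finset.range (n+2), ((n+1).choose k : ℝ) * A k (n+1-k) := by
  have hR : ∑ k ∈ Finset.range (n+2), ((n+1).choose k : ℝ) * A k (n+1-k)
      = ∑ k ∈ Finset.range (n+1), (((n.choose k : ℝ)) + (n.choose (k+1) : ℝ)) * A (k+1) (n-k)
        + A 0 (n+1) := by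
    rw [Finset.sum_range_succ']
    simp only [Nat.choose_zero_right, Nat.cast_one, one_mul, Nat.succ_sub_succ]
    congr 1
    refine Finset.sum_congr rfl fun k hk => ?_
    rw [Nat.choose_succ_succ, Nat.cast_add]
  have hS2 : ∑ k ∈ Finset.range (n+1), (n.choose k : ℝ) * A k (n-k+1)
      = ∑ k ∈ Finset.range (n+1), (n.choose (k+1) : ℝ) * A (k+1) (n-k) + A 0 (n+1) := by
    rw [Finset.sum_range_succ']
    simp only [Nat.choose_zero_right, Nat.cast_one, one_mul, Nat.sub_zero]
    congr 1
    rw [Finset.sum_range_succ]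
    simp only [Nat.choose_succ_self, Nat.cast_zero, zero_mul, add_zero]
    refine Finset.sum_congr rfl fun k hk => ?_
    simp only [Finset.mem_range] at hk
    congr 2
    omega
  simp only [mul_add, Finset.sum_add_distrib, hR, hS2, add_mul, Finset.sum_add_distrib]
  ring

lemma iteratedDeriv_leibniz {s : Set ℝ} (hs : IsOpen s) {f g : ℝ → ℝ}
    (hf : ContDiffOn ℝ (⊤ : ℕ∞) f s) (hg : ContDiffOn ℝ (⊤ : ℕ∞) g s) :
    ∀ n : ℕ, ∀ x ∈ s, iteratedDeriv n (fun y => f y * g y) x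
      = ∑ k ∈ Finset.range (n+1),
          (n.choose k : ℝ) * (iteratedDeriv k f x * iteratedDeriv (n-k) g x) := by
  intro n
  induction n with
  | zero => intro x hx; simp
  | succ n ih =>
    intro x hx
    have hev : iteratedDeriv n (fun y => f y * g y) =ᶠ[𝓝 x]
        fun y => ∑ k ∈ Finset.range (n+1),
          (n.choose k : ℝ) * (iteratedDeriv k f y * iteratedDeriv (n-k) g y) := by
      filter_upwards [hs.mem_nhds hx] with y hy using ih y hy
    rw [iteratedDeriv_succ, hev.deriv_eq]
    have hsum : HasDerivAt (fun y => ∑ k ∈ Finset.range (n+1),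
          (n.choose k : ℝ) * (iteratedDeriv k f y * iteratedDeriv (n-k) g y))
        (∑ k ∈ Finset.range (n+1), (n.choose k : ℝ) *
          (iteratedDeriv (k+1) f x * iteratedDeriv (n-k) g x
            + iteratedDeriv k f x * iteratedDeriv (n-k+1) g x)) x := by
      apply HasDerivAt.fun_sum
      intro k _
      exact ((hasDerivAt_iter hs hf k hx).mul (hasDerivAt_iter hs hg (n-k) hx)).const_mul _
    rw [hsum.deriv]
    exact binom_step n (fun i j => iteratedDeriv i f x * iteratedDeriv j g x)

lemma iteratedDeriv_const_mul'' (c : ℝ) (f : ℝ → ℝ) (n : ℕ) (x : ℝ) :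
    iteratedDeriv n (fun y => c * f y) x = c * iteratedDeriv n f x := by
  induction n generalizing x with
  | zero => simp
  | succ n ih =>
    rw [iteratedDeriv_succ, iteratedDeriv_succ]
    have : iteratedDeriv n (fun y => c * f y) = fun y => c * iteratedDeriv n f y :=
      funext fun y => ih y
    rw [this, deriv_const_mul_field]

lemma key_lemma (g : ℝ → ℝ) (D : ℝ) (hg : ContDiffOn ℝ (⊤ : ℕ∞) g (Ioi 0))
    (hsign : ∀ n : ℕ, ∀ x ∈ Ioi (0:ℝ), 0 ≤ (-1:ℝ)^n * iteratedDeriv n g x)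
    (hpos : ∀ x ∈ Ioi (0:ℝ), 0 < D - g x) :
    ∀ n : ℕ, ∀ μ : ℝ, 0 ≤ μ → ∀ x ∈ Ioi (0:ℝ),
      0 ≤ (-1:ℝ)^n * iteratedDeriv n (fun y => (D - g y) ^ (-μ)) x := by
  intro n
  induction n using Nat.strong_induction_on with
  | _ n IH =>
  match n with
  | 0 =>
    intro μ hμ x hx
    simpa [iteratedDeriv_zero] using Real.rpow_nonneg (hpos x hx).le (-μ)
  | (m+1) =>
    intro μ hμ x hx
    have hGc : ContDiffOn ℝ (⊤ : ℕ∞) (fun y => (D - g y) ^ (-(μ+1))) (Ioi 0) :=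
      (contDiffOn_const.sub hg).rpow_const_of_ne (fun y hy => (hpos y hy).ne')
    have hdgc : ContDiffOn ℝ (⊤ : ℕ∞) (deriv g) (Ioi 0) := hg.deriv_of_isOpen isOpen_Ioi (by simp)
    -- the derivative of F on Ioi 0
    have hder : ∀ y ∈ Ioi (0:ℝ), deriv (fun t => (D - g t) ^ (-μ)) y
        = μ * ((D - g y) ^ (-(μ+1)) * deriv g y) := by
      intro y hy
      have hgd : DifferentiableAt ℝ g y :=
        (hg.contDiffAt (Ioi_mem_nhds hy)).differentiableAt (by simp)
      have hh : HasDerivAt (fun t => D - g t) (-(deriv g y)) y :=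
        hgd.hasDerivAt.const_sub D
      have hr : HasDerivAt (fun t : ℝ => t ^ (-μ))
          (-μ * (D - g y) ^ (-μ - 1)) (D - g y) :=
        Real.hasDerivAt_rpow_const (Or.inl (hpos y hy).ne')
      have hc := hr.comp y hh
      simp only [Function.comp_def] at hc
      rw [hc.deriv]
      have : -μ - 1 = -(μ+1) := by ring
      rw [this]; ring
    have hEq : Set.EqOn (deriv (fun t => (D - g t) ^ (-μ)))
        (fun y => μ * ((D - g y) ^ (-(μ+1)) * deriv g y)) (Ioi 0) := fun y hy => hder y hy
    rw [iteratedDeriv_succ', hEq.iteratedDeriv_of_isOpen isOpen_Ioi m hx]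
    rw [iteratedDeriv_const_mul'' μ (fun y => (D - g y) ^ (-(μ+1)) * deriv g y) m x]
    rw [iteratedDeriv_leibniz isOpen_Ioi hGc hdgc m x hx]
    set S := ∑ k ∈ Finset.range (m+1), (m.choose k : ℝ) *
        (iteratedDeriv k (fun y => (D - g y) ^ (-(μ+1))) x * iteratedDeriv (m-k) (deriv g) x) with hSdef
    have hS : 0 ≤ (-1:ℝ)^(m+1) * S := by
      rw [hSdef, Finset.mul_sum]
      apply Finset.sum_nonneg
      intro k hk
      simp only [Finset.mem_range] at hk
      have hkm : k ≤ m := Nat.lt_succ_iff.mp hk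
      have h1 : 0 ≤ (-1:ℝ)^k * iteratedDeriv k (fun y => (D - g y) ^ (-(μ+1))) x :=
        IH k (Nat.lt_succ_of_le hkm) (μ+1) (by linarith) x hx
      have h2 : 0 ≤ (-1:ℝ)^(m-k+1) * iteratedDeriv (m-k) (deriv g) x := by
        have := hsign (m-k+1) x hx
        rwa [iteratedDeriv_succ'] at this
      have hpow : ((-1:ℝ))^(m+1) = (-1:ℝ)^k * (-1:ℝ)^(m-k+1) := by
        rw [← pow_add]; congr 1; omega
      rw [hpow]
      calc (0:ℝ) ≤ ((-1:ℝ)^k * iteratedDeriv k (fun y => (D - g y) ^ (-(μ+1))) x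
            * ((-1:ℝ)^(m-k+1) * iteratedDeriv (m-k) (deriv g) x)) * (m.choose k : ℝ) :=
            mul_nonneg (mul_nonneg h1 h2) (Nat.cast_nonneg _)
        _ = (-1:ℝ)^k * (-1:ℝ)^(m-k+1) * ((m.choose k : ℝ) *
            (iteratedDeriv k (fun y => (D - g y) ^ (-(μ+1))) x
              * iteratedDeriv (m-k) (deriv g) x)) := by ring
    calc (0:ℝ) ≤ μ * ((-1:ℝ)^(m+1) * S) := mul_nonneg hμ hS
      _ = (-1:ℝ)^(m+1) * (μ * S) := by ring

theorem completelyMonotonic_rpow_neg_of_sub (g : ℝ → ℝ) (L D μ : ℝ)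
    (hg : CompletelyMonotonic g)
    (hL : Filter.Tendsto g (nhdsWithin 0 (Set.Ioi 0)) (nhds L))
    (hD : L ≤ D) (hμ : 0 ≤ μ)
    (hpos : ∀ x ∈ Set.Ioi (0 : ℝ), 0 < D - g x) :
    CompletelyMonotonic (fun x => (D - g x) ^ (-μ)) := by
  obtain ⟨hg1, hg2⟩ := hg
  have hsign : ∀ n : ℕ, ∀ x ∈ Ioi (0:ℝ), 0 ≤ (-1:ℝ)^n * iteratedDeriv n g x := by
    intro n x hx
    have := hg2 n x hx
    rwa [iDW_open isOpen_Ioi hx n] at this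
  constructor
  · exact (contDiffOn_const.sub hg1).rpow_const_of_ne (fun x hx => (hpos x hx).ne')
  · intro n x hx
    rw [iDW_open isOpen_Ioi hx n]
    exact key_lemma g D hg1 hsign hpos n μ hμ x hx
end

section
/- If f : (0,∞) → ℝ is completely monotonic and b : (0,∞) → (0,∞) is a Bernstein function (nonnegative with completely monotonic first derivative), then the composition f ∘ b is completely monotonic. -/
open Real Set

/-- A Bernstein function is a nonnegative `C^∞` function on `(0,∞)`
whose first derivative is completely monotonic. -/
def BernsteinFunction (b : ℝ → ℝ) : Prop :=
  ContDiffOn ℝ (⊤ : ℕ∞) b (Set.Ioi 0) ∧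
    (∀ x ∈ Set.Ioi (0 : ℝ), 0 ≤ b x) ∧
    CompletelyMonotonic (fun x => derivWithin b (Set.Ioi 0) x)

/-- On an open set, the iterated derivative within the set coincides with the global one. -/
lemma CMB.iteratedDerivWithin_eq {s : Set ℝ} (hs : IsOpen s) (f : ℝ → ℝ) (n : ℕ)
    {x : ℝ} (hx : x ∈ s) : iteratedDerivWithin n f s x = iteratedDeriv n f x := by
  rw [iteratedDerivWithin_eq_iteratedFDerivWithin, iteratedDeriv_eq_iteratedFDeriv,
    iteratedFDerivWithin_of_isOpen n hs hx]

/-- Global reformulation of complete monotonicity using `iteratedDeriv`. -/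
lemma CMB.cm_iff (f : ℝ → ℝ) :
    CompletelyMonotonic f ↔ ContDiffOn ℝ (⊤ : ℕ∞) f (Set.Ioi 0) ∧
      ∀ n : ℕ, ∀ x ∈ Set.Ioi (0 : ℝ), 0 ≤ (-1 : ℝ) ^ n * iteratedDeriv n f x := by
  unfold CompletelyMonotonic
  refine and_congr_right fun _ => ?_
  constructor <;> intro h n x hx
  · rw [← CMB.iteratedDerivWithin_eq isOpen_Ioi f n hx]; exact h n x hx
  · rw [CMB.iteratedDerivWithin_eq isOpen_Ioi f n hx]; exact h n x hx

/-- Differentiability of iterated derivatives of a function smooth on an open set. -/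
lemma CMB.diffAt {s : Set ℝ} (hs : IsOpen s) {u : ℝ → ℝ} (hu : ContDiffOn ℝ (⊤ : ℕ∞) u s)
    (k : ℕ) {x : ℝ} (hx : x ∈ s) : DifferentiableAt ℝ (iteratedDeriv k u) x := by
  have h1 : DifferentiableWithinAt ℝ (iteratedDerivWithin k u s) s x :=
    hu.differentiableOn_iteratedDerivWithin (by exact_mod_cast lt_top_iff_ne_top.2 (by simp))
      hs.uniqueDiffOn x hx
  have h2 : DifferentiableAt ℝ (iteratedDerivWithin k u s) x :=
    h1.differentiableAt (hs.mem_nhds hx)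
  have h3 : iteratedDerivWithin k u s =ᶠ[nhds x] iteratedDeriv k u := by
    filter_upwards [hs.mem_nhds hx] with y hy
    exact CMB.iteratedDerivWithin_eq hs u k hy
  exact h3.differentiableAt_iff.mp h2

/-- Leibniz formula for iterated derivatives on an open set. -/
lemma CMB.leibniz {s : Set ℝ} (hs : IsOpen s) {u v : ℝ → ℝ}
    (hu : ContDiffOn ℝ (⊤ : ℕ∞) u s) (hv : ContDiffOn ℝ (⊤ : ℕ∞) v s) (n : ℕ) :
    ∀ x ∈ s, iteratedDeriv n (fun y => u y * v y) x =
      ∑ k ∈ Finset.range (n + 1),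
        (n.choose k : ℝ) * (iteratedDeriv k u x * iteratedDeriv (n - k) v x) := by
  induction n with
  | zero => intro x hx; simp
  | succ n ih =>
    intro x hx
    have heq : iteratedDeriv n (fun y => u y * v y) =ᶠ[nhds x]
        fun y => ∑ k ∈ Finset.range (n + 1),
          (n.choose k : ℝ) * (iteratedDeriv k u y * iteratedDeriv (n - k) v y) := by
      filter_upwards [hs.mem_nhds hx] with y hy
      exact ih y hy
    rw [iteratedDeriv_succ, heq.deriv_eq]
    have hdiff : ∀ k ∈ Finset.range (n + 1), DifferentiableAt ℝ
        (fun y => (n.choose k : ℝ) * (iteratedDeriv k u y * iteratedDeriv (n - k) v y)) x :=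
      fun k _ => (((CMB.diffAt hs hu k hx).mul (CMB.diffAt hs hv (n - k) hx)).const_mul _)
    rw [deriv_fun_sum hdiff]
    have hterm : ∀ k ∈ Finset.range (n + 1),
        deriv (fun y => (n.choose k : ℝ) * (iteratedDeriv k u y * iteratedDeriv (n - k) v y)) x
        = (n.choose k : ℝ) * (iteratedDeriv (k + 1) u x * iteratedDeriv (n - k) v x)
          + (n.choose k : ℝ) * (iteratedDeriv k u x * iteratedDeriv (n - k + 1) v x) := by
      intro k _
      rw [deriv_const_mul _ (show DifferentiableAt ℝ (fun y => iteratedDeriv k u y * iteratedDeriv (n - k) v y) x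
          from (CMB.diffAt hs hu k hx).mul (CMB.diffAt hs hv (n - k) hx)),
        deriv_fun_mul (CMB.diffAt hs hu k hx) (CMB.diffAt hs hv (n - k) hx)]
      rw [← iteratedDeriv_succ, ← iteratedDeriv_succ]
      ring
    rw [Finset.sum_congr rfl hterm, Finset.sum_add_distrib]
    -- now the binomial juggling
    set A : ℕ → ℕ → ℝ := fun i j => iteratedDeriv i u x * iteratedDeriv j v x with hA
    have key : (∑ k ∈ Finset.range (n + 1), (n.choose k : ℝ) * A (k + 1) (n - k))
        + ∑ k ∈ Finset.range (n + 1), (n.choose k : ℝ) * A k (n - k + 1)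
        = ∑ k ∈ Finset.range (n + 2), ((n + 1).choose k : ℝ) * A k (n + 1 - k) := by
      have hR : ∑ k ∈ Finset.range (n + 2), ((n + 1).choose k : ℝ) * A k (n + 1 - k)
          = (∑ k ∈ Finset.range (n + 1), ((n + 1).choose (k + 1) : ℝ) * A (k + 1) (n - k))
            + ((n + 1).choose 0 : ℝ) * A 0 (n + 1) := by
        rw [Finset.sum_range_succ' (fun k => ((n + 1).choose k : ℝ) * A k (n + 1 - k)) (n + 1)]
        simp [Nat.succ_sub_succ]
      have hS2 : ∑ k ∈ Finset.range (n + 1), (n.choose k : ℝ) * A k (n - k + 1)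
          = (∑ k ∈ Finset.range n, (n.choose (k + 1) : ℝ) * A (k + 1) (n - (k + 1) + 1))
            + (n.choose 0 : ℝ) * A 0 (n + 1) := by
        rw [Finset.sum_range_succ' (fun k => (n.choose k : ℝ) * A k (n - k + 1)) n]
        simp
      have hsub : ∀ k < n, n - (k + 1) + 1 = n - k := by
        intro k hk; omega
      have hS2' : ∑ k ∈ Finset.range n, (n.choose (k + 1) : ℝ) * A (k + 1) (n - (k + 1) + 1)
          = ∑ k ∈ Finset.range (n + 1), (n.choose (k + 1) : ℝ) * A (k + 1) (n - k) := by
        rw [Finset.sum_range_succ]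
        rw [Finset.sum_congr rfl (fun k hk => by
          rw [hsub k (Finset.mem_range.mp hk)])]
        simp
      rw [hR, hS2, hS2', ← add_assoc, ← Finset.sum_add_distrib]
      have : ∀ k ∈ Finset.range (n + 1), (n.choose k : ℝ) * A (k + 1) (n - k)
          + (n.choose (k + 1) : ℝ) * A (k + 1) (n - k)
          = ((n + 1).choose (k + 1) : ℝ) * A (k + 1) (n - k) := by
        intro k _
        rw [Nat.choose_succ_succ, Nat.cast_add]
        ring
      rw [Finset.sum_congr rfl this]
      simp
    exact key

theorem completelyMonotonic_comp_bernstein (f b : ℝ → ℝ)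
    (hf : CompletelyMonotonic f) (hb : BernsteinFunction b)
    (hbpos : ∀ x ∈ Set.Ioi (0 : ℝ), 0 < b x) :
    CompletelyMonotonic (f ∘ b) := by
  obtain ⟨hbs, -, hbd⟩ := hb
  have hmaps : Set.MapsTo b (Set.Ioi 0) (Set.Ioi 0) := fun x hx => hbpos x hx
  -- global-form hypotheses
  rw [CMB.cm_iff] at hf hbd ⊢
  -- derivative of b, globally, is CM in the global sense
  have hb' : ∀ n : ℕ, ∀ x ∈ Set.Ioi (0 : ℝ), 0 ≤ (-1 : ℝ) ^ n * iteratedDeriv n (deriv b) x := by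
    intro n x hx
    have := hbd.2 n x hx
    have heq : Set.EqOn (fun x => derivWithin b (Set.Ioi 0) x) (deriv b) (Set.Ioi 0) :=
      fun y hy => derivWithin_of_isOpen isOpen_Ioi hy
    rwa [heq.iteratedDeriv_of_isOpen isOpen_Ioi n hx] at this
  have hb'smooth : ContDiffOn ℝ (⊤ : ℕ∞) (deriv b) (Set.Ioi 0) :=
    hbs.deriv_of_isOpen isOpen_Ioi (by simp)
  -- shift lemma: if g satisfies the global CM conditions, so does -(deriv g)
  have hshift : ∀ g : ℝ → ℝ,
      (ContDiffOn ℝ (⊤ : ℕ∞) g (Set.Ioi 0) ∧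
        ∀ n : ℕ, ∀ x ∈ Set.Ioi (0 : ℝ), 0 ≤ (-1 : ℝ) ^ n * iteratedDeriv n g x) →
      (ContDiffOn ℝ (⊤ : ℕ∞) (fun y => -(deriv g y)) (Set.Ioi 0) ∧
        ∀ n : ℕ, ∀ x ∈ Set.Ioi (0 : ℝ),
          0 ≤ (-1 : ℝ) ^ n * iteratedDeriv n (fun y => -(deriv g y)) x) := by
    intro g hg
    refine ⟨(hg.1.deriv_of_isOpen isOpen_Ioi (by simp)).neg, fun n x hx => ?_⟩
    have h1 : iteratedDeriv n (fun y => -(deriv g y)) x = -iteratedDeriv n (deriv g) x :=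
      iteratedDeriv_neg n (deriv g) x
    have h2 : iteratedDeriv n (deriv g) x = iteratedDeriv (n + 1) g x :=
      (congrFun iteratedDeriv_succ'.symm x)
    have := hg.2 (n + 1) x hx
    rw [h1, h2]
    calc (0 : ℝ) ≤ (-1) ^ (n + 1) * iteratedDeriv (n + 1) g x := this
      _ = (-1) ^ n * -iteratedDeriv (n + 1) g x := by ring
  -- the main claim, by strong induction on n, universally quantified over f
  have main : ∀ n : ℕ, ∀ g : ℝ → ℝ,
      (ContDiffOn ℝ (⊤ : ℕ∞) g (Set.Ioi 0) ∧
        ∀ m : ℕ, ∀ x ∈ Set.Ioi (0 : ℝ), 0 ≤ (-1 : ℝ) ^ m * iteratedDeriv m g x) →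
      ∀ x ∈ Set.Ioi (0 : ℝ), 0 ≤ (-1 : ℝ) ^ n * iteratedDeriv n (g ∘ b) x := by
    intro n
    induction n using Nat.strong_induction_on with
    | _ n ih =>
      intro g hg x hx
      match n with
      | 0 =>
        simpa using (by simpa using hg.2 0 (b x) (hbpos x hx))
      | (n + 1) =>
        -- the negated derivative of g
        set g' : ℝ → ℝ := fun y => -(deriv g y) with hg'
        have hg'cm := hshift g hg
        have hgb : Set.EqOn (deriv (g ∘ b))
            (fun y => -((g' ∘ b) y * deriv b y)) (Set.Ioi 0) := by
          intro y hy
          have hbdiff : DifferentiableAt ℝ b y :=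
            (hbs.contDiffAt (isOpen_Ioi.mem_nhds hy)).differentiableAt (by simp)
          have hgdiff : DifferentiableAt ℝ g (b y) :=
            (hg.1.contDiffAt (isOpen_Ioi.mem_nhds (hbpos y hy))).differentiableAt (by simp)
          have := deriv_comp y hgdiff hbdiff
          simp only [Function.comp, hg']
          rw [show (deriv (g ∘ b) y) = deriv g (b y) * deriv b y from this]
          ring
        have hstep : iteratedDeriv (n + 1) (g ∘ b) x
            = -iteratedDeriv n (fun y => (g' ∘ b) y * deriv b y) x := by
          rw [iteratedDeriv_succ',
            hgb.iteratedDeriv_of_isOpen isOpen_Ioi n hx]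
          exact iteratedDeriv_neg n _ x
        have hucd : ContDiffOn ℝ (⊤ : ℕ∞) (g' ∘ b) (Set.Ioi 0) := hg'cm.1.comp hbs hmaps
        have hlz := CMB.leibniz isOpen_Ioi hucd hb'smooth n x hx
        rw [hstep, hlz]
        rw [show ((-1 : ℝ)) ^ (n + 1) * -(∑ k ∈ Finset.range (n + 1),
            (n.choose k : ℝ) * (iteratedDeriv k (g' ∘ b) x * iteratedDeriv (n - k) (deriv b) x))
            = ∑ k ∈ Finset.range (n + 1), (-1 : ℝ) ^ n *
            ((n.choose k : ℝ) * (iteratedDeriv k (g' ∘ b) x * iteratedDeriv (n - k) (deriv b) x))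
            from by rw [← Finset.mul_sum]; ring]
        refine Finset.sum_nonneg fun k hk => ?_
        have hkn : k ≤ n := Nat.lt_succ_iff.mp (Finset.mem_range.mp hk)
        have e1 : (0 : ℝ) ≤ (-1) ^ k * iteratedDeriv k (g' ∘ b) x :=
          ih k (Nat.lt_succ_of_le hkn) g' hg'cm x hx
        have e2 : (0 : ℝ) ≤ (-1) ^ (n - k) * iteratedDeriv (n - k) (deriv b) x :=
          hb' (n - k) x hx
        have hpow : ((-1 : ℝ)) ^ n = (-1) ^ k * (-1) ^ (n - k) := by
          rw [← pow_add, Nat.add_sub_cancel' hkn]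
        rw [hpow]
        have : (0 : ℝ) ≤ (n.choose k : ℝ) := Nat.cast_nonneg _
        calc (0 : ℝ) ≤ (n.choose k : ℝ) * (((-1) ^ k * iteratedDeriv k (g' ∘ b) x)
              * ((-1) ^ (n - k) * iteratedDeriv (n - k) (deriv b) x)) :=
            mul_nonneg this (mul_nonneg e1 e2)
          _ = (-1) ^ k * (-1) ^ (n - k) *
              ((n.choose k : ℝ) *
                (iteratedDeriv k (g' ∘ b) x * iteratedDeriv (n - k) (deriv b) x)) := by ring
  exact ⟨hf.1.comp hbs hmaps, fun n x hx => main n f hf x hx⟩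
end

section
/- For every τ > 0, the function s ↦ sqrt(s² + s/τ) is a Bernstein function on (0, ∞), i.e., it is nonnegative and its first derivative is completely monotonic. -/
open Real Set

namespace BernsteinAux

open Polynomial

noncomputable def Qb (a : ℝ) : ℕ → Polynomial ℝ
  | 0 => X
  | (n+1) => C ((2*n+1 : ℝ)) * (X * Qb a n) - (X^2 - C (a^2)) * derivative (Qb a n)

lemma Qb_coeff_succ (a : ℝ) (n m : ℕ) :
    (Qb a (n+1)).coeff (m+1)
      = ((2*n+1 : ℝ) - m) * (Qb a n).coeff m + a^2 * (m+2) * (Qb a n).coeff (m+2) := by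
  set p := Qb a n with hp
  have h2 : (X^2 * derivative p).coeff (m+1) = (m:ℝ) * p.coeff m := by
    rcases m with _ | m
    · simp [coeff_X_pow_mul']
    · rw [show m+1+1 = m + 2 by ring, coeff_X_pow_mul (derivative p) 2 m, coeff_derivative]
      push_cast; ring
  rw [Qb, coeff_sub, coeff_C_mul, coeff_X_mul, sub_mul, coeff_sub, h2, coeff_C_mul,
    coeff_derivative]
  push_cast; ring

lemma Qb_coeff_zero_succ (a : ℝ) (n : ℕ) :
    (Qb a (n+1)).coeff 0 = a^2 * (Qb a n).coeff 1 := by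
  rw [Qb, coeff_sub, coeff_C_mul, mul_coeff_zero, sub_mul, coeff_sub, mul_coeff_zero,
    coeff_C_mul, coeff_derivative]
  simp

lemma Qb_vanish (a : ℝ) : ∀ n m : ℕ, n + 2 ≤ m → (Qb a n).coeff m = 0 := by
  intro n
  induction n with
  | zero => intro m hm; rw [Qb, coeff_X]; rw [if_neg (by omega)]
  | succ n IH =>
    intro m hm
    obtain ⟨k, rfl⟩ : ∃ k, m = k + 1 := ⟨m - 1, by omega⟩
    rw [Qb_coeff_succ, IH k (by omega), IH (k+2) (by omega)]
    ring

lemma Qb_nonneg (a : ℝ) : ∀ n m : ℕ, 0 ≤ (Qb a n).coeff m := by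
  intro n
  induction n with
  | zero => intro m; rw [Qb, coeff_X]; split <;> norm_num
  | succ n IH =>
    intro m
    rcases m with _ | k
    · rw [Qb_coeff_zero_succ]
      exact mul_nonneg (sq_nonneg a) (IH 1)
    · rw [Qb_coeff_succ]
      rcases le_or_gt (k : ℝ) (2*n+1 : ℝ) with h | h
      · have h1 : 0 ≤ ((2*n+1 : ℝ) - k) := by linarith
        have := IH k; have := IH (k+2)
        positivity
      · have hk : n + 2 ≤ k := by
          have h' : ((2*n+1 : ℕ) : ℝ) < (k : ℝ) := by push_cast; linarith
          have := Nat.cast_lt.mp h'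
          omega
        rw [Qb_vanish a n k hk]
        have := IH (k+2)
        have h2 : (0:ℝ) ≤ a^2 * (k+2) := by positivity
        nlinarith

lemma Qb_eval_nonneg (a : ℝ) (n : ℕ) {u : ℝ} (hu : 0 ≤ u) : 0 ≤ (Qb a n).eval u := by
  rw [Polynomial.eval_eq_sum_range]
  exact Finset.sum_nonneg fun i _ => mul_nonneg (Qb_nonneg a n i) (pow_nonneg hu i)

lemma Qb_eval_succ (a : ℝ) (n : ℕ) (u : ℝ) :
    (Qb a (n+1)).eval u
      = (2*n+1 : ℝ) * u * (Qb a n).eval u - (u^2 - a^2) * (derivative (Qb a n)).eval u := by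
  simp [Qb]; ring

noncomputable def Gb (τ : ℝ) (n : ℕ) (x : ℝ) : ℝ :=
  (-1:ℝ)^n * (Qb (1/(2*τ)) n).eval (x + 1/(2*τ)) * Real.sqrt (x^2 + x/τ)
    / (x^2 + x/τ)^(n+1)

section
variable {τ : ℝ} (hτ : 0 < τ)
include hτ

lemma Wpos {x : ℝ} (hx : 0 < x) : 0 < x^2 + x/τ := by positivity

lemma hasDerivAt_W (x : ℝ) :
    HasDerivAt (fun s : ℝ => s^2 + s/τ) (2*(x + 1/(2*τ))) x := by
  have h : HasDerivAt (fun s : ℝ => s^2 + s/τ) (2*x + 1/τ) x := by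
    simpa [Pi.add_def] using ((hasDerivAt_pow 2 x).add ((hasDerivAt_id x).div_const τ))
  convert h using 1
  field_simp

lemma hasDerivAt_sqrtW {x : ℝ} (hx : 0 < x) :
    HasDerivAt (fun s : ℝ => Real.sqrt (s^2 + s/τ))
      ((x + 1/(2*τ)) / Real.sqrt (x^2 + x/τ)) x := by
  have hW : 0 < x^2 + x/τ := Wpos hτ hx
  have hS : (0:ℝ) < Real.sqrt (x^2 + x/τ) := Real.sqrt_pos.mpr hW
  have := (Real.hasDerivAt_sqrt hW.ne').comp x (hasDerivAt_W hτ x)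
  refine this.congr_deriv ?_
  field_simp

lemma hasDerivAt_Gb (n : ℕ) {x : ℝ} (hx : 0 < x) :
    HasDerivAt (Gb τ n) (Gb τ (n+1) x) x := by
  set a := 1/(2*τ) with ha
  set u := x + a with hu
  set W := x^2 + x/τ with hWdef
  have hW : 0 < W := Wpos hτ hx
  have hS : (0:ℝ) < Real.sqrt W := Real.sqrt_pos.mpr hW
  set S := Real.sqrt W with hSdef
  have hSS : S * S = W := Real.mul_self_sqrt hW.le
  have hw' : HasDerivAt (fun s : ℝ => s^2 + s/τ) (2*u) x := hasDerivAt_W hτ x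
  have hsqrt : HasDerivAt (fun s : ℝ => Real.sqrt (s^2 + s/τ)) (u / S) x :=
    hasDerivAt_sqrtW hτ hx
  have hpoly : HasDerivAt (fun s : ℝ => (Qb a n).eval (s + a))
      ((derivative (Qb a n)).eval u) x := by
    simpa [Function.comp_def] using ((Qb a n).hasDerivAt u).comp x ((hasDerivAt_id x).add_const a)
  have hnum : HasDerivAt (fun s : ℝ => (-1:ℝ)^n * (Qb a n).eval (s + a) * Real.sqrt (s^2 + s/τ))
      (((-1:ℝ)^n * (derivative (Qb a n)).eval u) * S + ((-1:ℝ)^n * (Qb a n).eval u) * (u / S)) x :=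
    (hpoly.const_mul _).mul hsqrt
  have hden : HasDerivAt (fun s : ℝ => (s^2 + s/τ)^(n+1)) (((n:ℝ)+1) * W^n * (2*u)) x := by
    have := hw'.pow (n+1)
    simpa [Pi.pow_def] using this
  have final := hnum.div hden (pow_ne_zero _ hW.ne')
  convert final using 1
  show Gb τ (n+1) x = _
  unfold Gb
  rw [← ha, ← hu, ← hWdef, ← hSdef, Qb_eval_succ]
  have hW' : W = S^2 := by rw [sq, hSS]
  have hu2 : u^2 - a^2 = W := by rw [hWdef, hu, ha]; field_simp; ring
  rw [hu2, hW']
  field_simp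
  ring
  all_goals rfl

lemma iterWithin (n : ℕ) :
    ∀ x ∈ Ioi (0:ℝ), iteratedDerivWithin n (Gb τ 0) (Ioi 0) x = Gb τ n x := by
  induction n with
  | zero => intro x hx; simp
  | succ n IH =>
    intro x hx
    rw [iteratedDerivWithin_succ,
      derivWithin_of_isOpen isOpen_Ioi hx]
    have heq : deriv (iteratedDerivWithin n (Gb τ 0) (Ioi 0)) x = deriv (Gb τ n) x := by
      apply Filter.EventuallyEq.deriv_eq
      filter_upwards [isOpen_Ioi.mem_nhds hx] with y hy using IH y hy
    rw [heq, (hasDerivAt_Gb hτ n hx).deriv]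

lemma smooth_f : ContDiffOn ℝ (⊤ : ℕ∞) (fun s : ℝ => Real.sqrt (s^2 + s/τ)) (Ioi 0) := by
  intro x hx
  have hW : 0 < x^2 + x/τ := Wpos hτ hx
  have h1 : ContDiffAt ℝ (⊤ : ℕ∞) Real.sqrt (x^2 + x/τ) := Real.contDiffAt_sqrt hW.ne'
  have h2 : ContDiffAt ℝ (⊤ : ℕ∞) (fun s : ℝ => s^2 + s/τ) x :=
    ((contDiff_id.pow 2).add (contDiff_id.div_const τ)).contDiffAt
  exact (h1.comp x h2).contDiffWithinAt

lemma eqOn_deriv :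
    EqOn (fun y => derivWithin (fun s : ℝ => Real.sqrt (s^2 + s/τ)) (Ioi 0) y)
      (Gb τ 0) (Ioi 0) := by
  intro y hy
  have hW : 0 < y^2 + y/τ := Wpos hτ hy
  have hS : (0:ℝ) < Real.sqrt (y^2 + y/τ) := Real.sqrt_pos.mpr hW
  simp only
  rw [derivWithin_of_isOpen isOpen_Ioi hy, (hasDerivAt_sqrtW hτ hy).deriv]
  unfold Gb
  simp only [pow_zero, one_mul, pow_one, Qb, Polynomial.eval_X]
  rw [zero_add, pow_one, div_eq_div_iff hS.ne' hW.ne', mul_assoc,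
    Real.mul_self_sqrt hW.le]
end

end BernsteinAux

open BernsteinAux in
theorem bernstein_sqrt_sq_add_div (τ : ℝ) (hτ : 0 < τ) :
    BernsteinFunction (fun s => Real.sqrt (s ^ 2 + s / τ)) := by
  refine ⟨smooth_f hτ, fun x hx => Real.sqrt_nonneg _, ?_, ?_⟩
  · exact (smooth_f hτ).derivWithin (uniqueDiffOn_Ioi 0) (by simp)
  · intro n x hx
    have key : iteratedDerivWithin n
        (fun y => derivWithin (fun s : ℝ => Real.sqrt (s^2 + s/τ)) (Ioi 0) y) (Ioi 0) x
        = Gb τ n x := by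
      rw [iteratedDerivWithin_congr (eqOn_deriv hτ) hx]
      exact iterWithin hτ n x hx
    rw [key]
    have hW : 0 < x^2 + x/τ := Wpos hτ hx
    have hx0 : (0:ℝ) < x := hx
    have hu : (0:ℝ) ≤ x + 1/(2*τ) := by
      have h2 : (0:ℝ) < 1/(2*τ) := by positivity
      linarith
    have hE := Qb_eval_nonneg (1/(2*τ)) n hu
    unfold Gb
    have hrw : (-1:ℝ)^n * ((-1:ℝ)^n * (Qb (1/(2*τ)) n).eval (x + 1/(2*τ))
          * Real.sqrt (x^2 + x/τ) / (x^2 + x/τ)^(n+1))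
        = (Qb (1/(2*τ)) n).eval (x + 1/(2*τ)) * Real.sqrt (x^2 + x/τ) / (x^2 + x/τ)^(n+1) := by
      rw [← mul_div_assoc, ← mul_assoc, ← mul_assoc, ← mul_pow]
      norm_num
    rw [hrw]
    exact div_nonneg (mul_nonneg hE (Real.sqrt_nonneg _)) (pow_nonneg hW.le _)
end

section
/- For every τ > 0, the function s ↦ (s + 1/τ)/sqrt(s² + s/τ) = (1 + 1/(τ s))^{1/2} is completely monotonic on (0, ∞). -/
open Real Set

noncomputable def gfun (c a b : ℝ) : ℝ → ℝ := fun x => x ^ (-a) * (x + c) ^ (-b)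

lemma contDiffOn_gfun {c : ℝ} (hc : 0 ≤ c) (a b : ℝ) :
    ContDiffOn ℝ (⊤ : ℕ∞) (gfun c a b) (Set.Ioi 0) := by
  intro x hx
  have hx0 : (0:ℝ) < x := hx
  have hxc : (0:ℝ) < x + c := by linarith
  have h1 : ContDiffAt ℝ (⊤ : ℕ∞) (fun x : ℝ => x ^ (-a)) x :=
    Real.contDiffAt_rpow_const_of_ne hx0.ne'
  have h2 : ContDiffAt ℝ (⊤ : ℕ∞) (fun x : ℝ => (x + c) ^ (-b)) x := by
    have h3 : ContDiffAt ℝ (⊤ : ℕ∞) (fun y : ℝ => y ^ (-b)) (x + c) :=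
      Real.contDiffAt_rpow_const_of_ne hxc.ne'
    exact h3.comp x (contDiffAt_id.add contDiffAt_const)
  exact (h1.mul h2).contDiffWithinAt

lemma hasDerivAt_gfun {c : ℝ} (hc : 0 ≤ c) (a b x : ℝ) (hx : 0 < x) :
    HasDerivAt (gfun c a b)
      (-(a * gfun c (a+1) b x + b * gfun c a (b+1) x)) x := by
  have hxc : (0:ℝ) < x + c := by linarith
  have h1 : HasDerivAt (fun y : ℝ => y ^ (-a)) (-a * x ^ (-a - 1)) x :=
    Real.hasDerivAt_rpow_const (Or.inl hx.ne')
  have h2 : HasDerivAt (fun y : ℝ => (y + c) ^ (-b)) (-b * (x + c) ^ (-b - 1)) x := by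
    have h3 : HasDerivAt (fun y : ℝ => y ^ (-b)) (-b * (x + c) ^ (-b - 1)) (x + c) :=
      Real.hasDerivAt_rpow_const (Or.inl hxc.ne')
    exact (h3.comp x ((hasDerivAt_id x).add_const c)).congr_deriv (mul_one _)
  have h4 := h1.mul h2
  refine h4.congr_deriv ?_
  unfold gfun
  have e1 : -(a+1) = -a - 1 := by ring
  have e2 : -(b+1) = -b - 1 := by ring
  rw [e1, e2]; ring

lemma sign_gfun {c : ℝ} (hc : 0 ≤ c) :
    ∀ n : ℕ, ∀ a b : ℝ, 0 ≤ a → 0 ≤ b → ∀ x ∈ Set.Ioi (0:ℝ),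
      0 ≤ (-1:ℝ)^n * iteratedDerivWithin n (gfun c a b) (Set.Ioi 0) x := by
  intro n
  induction n with
  | zero =>
    intro a b ha hb x hx
    have hx0 : (0:ℝ) < x := hx
    have hxc : (0:ℝ) < x + c := by linarith
    simp only [iteratedDerivWithin_zero, pow_zero, one_mul]
    exact mul_nonneg (Real.rpow_nonneg hx0.le _) (Real.rpow_nonneg hxc.le _)
  | succ n IH =>
    intro a b ha hb x hx
    have hU : UniqueDiffOn ℝ (Set.Ioi (0:ℝ)) := uniqueDiffOn_Ioi 0
    rw [iteratedDerivWithin_succ']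
    have hEq : Set.EqOn (derivWithin (gfun c a b) (Set.Ioi 0))
        (fun y => -(a * gfun c (a+1) b y + b * gfun c a (b+1) y)) (Set.Ioi 0) := by
      intro y hy
      exact ((hasDerivAt_gfun hc a b y hy).hasDerivWithinAt).derivWithin
        (hU.uniqueDiffWithinAt hy)
    rw [iteratedDerivWithin_congr hEq hx]
    rw [iteratedDerivWithin_fun_neg]
    have h1 : ContDiffOn ℝ n (fun y => a * gfun c (a+1) b y) (Set.Ioi 0) :=
      contDiffOn_const.mul ((contDiffOn_gfun hc (a+1) b).of_le (by exact_mod_cast le_top))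
    have h2 : ContDiffOn ℝ n (fun y => b * gfun c a (b+1) y) (Set.Ioi 0) :=
      contDiffOn_const.mul ((contDiffOn_gfun hc a (b+1)).of_le (by exact_mod_cast le_top))
    have hadd : iteratedDerivWithin n
        (fun y => a * gfun c (a+1) b y + b * gfun c a (b+1) y) (Set.Ioi 0) x
        = a * iteratedDerivWithin n (gfun c (a+1) b) (Set.Ioi 0) x
          + b * iteratedDerivWithin n (gfun c a (b+1)) (Set.Ioi 0) x := by
      rw [show (fun y => a * gfun c (a+1) b y + b * gfun c a (b+1) y)
          = (fun y => a * gfun c (a+1) b y) + (fun y => b * gfun c a (b+1) y) from rfl,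
        iteratedDerivWithin_add hx hU (h1 x hx) (h2 x hx),
        iteratedDerivWithin_const_mul hx hU a ((contDiffOn_gfun hc (a+1) b).of_le (by exact_mod_cast le_top) x hx),
        iteratedDerivWithin_const_mul hx hU b ((contDiffOn_gfun hc a (b+1)).of_le (by exact_mod_cast le_top) x hx)]
    rw [hadd]
    have IH1 := IH (a+1) b (by linarith) hb x hx
    have IH2 := IH a (b+1) ha (by linarith) x hx
    have : (-1:ℝ)^(n+1) * -(a * iteratedDerivWithin n (gfun c (a+1) b) (Set.Ioi 0) x
          + b * iteratedDerivWithin n (gfun c a (b+1)) (Set.Ioi 0) x)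
        = a * ((-1:ℝ)^n * iteratedDerivWithin n (gfun c (a+1) b) (Set.Ioi 0) x)
          + b * ((-1:ℝ)^n * iteratedDerivWithin n (gfun c a (b+1)) (Set.Ioi 0) x) := by
      rw [pow_succ]; ring
    rw [this]
    exact add_nonneg (mul_nonneg ha IH1) (mul_nonneg hb IH2)

noncomputable def Ffun (c : ℝ) : ℝ → ℝ := fun s => s ^ (-(1/2) : ℝ) * (s + c) ^ ((1/2) : ℝ)

lemma contDiffOn_Ffun {c : ℝ} (hc : 0 ≤ c) : ContDiffOn ℝ (⊤ : ℕ∞) (Ffun c) (Set.Ioi 0) := by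
  intro x hx
  have hx0 : (0:ℝ) < x := hx
  have hxc : (0:ℝ) < x + c := by linarith
  have h1 : ContDiffAt ℝ (⊤ : ℕ∞) (fun x : ℝ => x ^ (-(1/2) : ℝ)) x :=
    Real.contDiffAt_rpow_const_of_ne hx0.ne'
  have h2 : ContDiffAt ℝ (⊤ : ℕ∞) (fun x : ℝ => (x + c) ^ ((1/2) : ℝ)) x := by
    have h3 : ContDiffAt ℝ (⊤ : ℕ∞) (fun y : ℝ => y ^ ((1/2) : ℝ)) (x + c) :=
      Real.contDiffAt_rpow_const_of_ne hxc.ne'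
    exact h3.comp x (contDiffAt_id.add contDiffAt_const)
  exact (h1.mul h2).contDiffWithinAt

lemma hasDerivAt_Ffun {c : ℝ} (hc : 0 ≤ c) (x : ℝ) (hx : 0 < x) :
    HasDerivAt (Ffun c) (-(c/2 * gfun c (3/2) (1/2) x)) x := by
  have hxc : (0:ℝ) < x + c := by linarith
  have h1 : HasDerivAt (fun y : ℝ => y ^ (-(1/2) : ℝ)) (-(1/2) * x ^ (-(1/2) - 1 : ℝ)) x :=
    Real.hasDerivAt_rpow_const (Or.inl hx.ne')
  have h2 : HasDerivAt (fun y : ℝ => (y + c) ^ ((1/2) : ℝ))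
      ((1/2) * (x + c) ^ ((1/2) - 1 : ℝ)) x := by
    have h3 : HasDerivAt (fun y : ℝ => y ^ ((1/2) : ℝ))
        ((1/2) * (x + c) ^ ((1/2) - 1 : ℝ)) (x + c) :=
      Real.hasDerivAt_rpow_const (Or.inl hxc.ne')
    exact (h3.comp x ((hasDerivAt_id x).add_const c)).congr_deriv (mul_one _)
  have h4 := h1.mul h2
  refine h4.congr_deriv ?_
  unfold gfun
  have e1 : x ^ (-(1/2) - 1 : ℝ) = x ^ (-(3/2) : ℝ) := by norm_num
  have e2 : (x + c) ^ ((1/2) - 1 : ℝ) = (x + c) ^ (-(1/2) : ℝ) := by norm_num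
  have e3 : (x + c) ^ ((1/2) : ℝ) = (x + c) * (x + c) ^ (-(1/2) : ℝ) := by
    have h5 := Real.rpow_add hxc 1 (-(1/2))
    rw [Real.rpow_one] at h5
    rw [show (1 : ℝ) + -(1/2) = (1/2 : ℝ) by norm_num] at h5
    exact h5
  have e4 : x ^ (-(1/2) : ℝ) = x * x ^ (-(3/2) : ℝ) := by
    have h5 := Real.rpow_add hx 1 (-(3/2))
    rw [Real.rpow_one] at h5
    rw [show (1 : ℝ) + -(3/2) = (-(1/2) : ℝ) by norm_num] at h5
    exact h5
  rw [e1, e2, e3, e4]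
  ring

lemma Ffun_eq {c : ℝ} (hc : 0 < c) {s : ℝ} (hs : 0 < s) :
    Ffun c s = Real.sqrt (s + c) / Real.sqrt s := by
  have hsc : (0:ℝ) < s + c := by linarith
  unfold Ffun
  rw [Real.rpow_neg hs.le, ← Real.sqrt_eq_rpow, ← Real.sqrt_eq_rpow]
  rw [div_eq_mul_inv, mul_comm]

theorem completelyMonotonic_one_add_inv_sqrt (τ : ℝ) (hτ : 0 < τ) :
    (∀ s : ℝ, 0 < s →
      (s + 1 / τ) / Real.sqrt (s ^ 2 + s / τ) = (1 + 1 / (τ * s)) ^ ((1 : ℝ) / 2)) ∧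
    CompletelyMonotonic (fun s => (s + 1 / τ) / Real.sqrt (s ^ 2 + s / τ)) := by
  set c : ℝ := 1 / τ with hc_def
  have hc : 0 < c := by positivity
  have key : ∀ s : ℝ, 0 < s →
      (s + 1 / τ) / Real.sqrt (s ^ 2 + s / τ) = Real.sqrt (s + c) / Real.sqrt s := by
    intro s hs
    have hsc : (0:ℝ) < s + c := by linarith
    have h1 : s ^ 2 + s / τ = s * (s + c) := by
      rw [hc_def]; ring
    rw [h1, Real.sqrt_mul hs.le]
    have hA : Real.sqrt s ≠ 0 := by positivity
    have hB : Real.sqrt (s + c) ≠ 0 := by positivity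
    have h2 : Real.sqrt (s+c) * Real.sqrt (s+c) = s + c := Real.mul_self_sqrt hsc.le
    field_simp
    rw [sq, h2, hc_def, mul_add, mul_one_div_cancel hτ.ne']
    ring
  have part1 : ∀ s : ℝ, 0 < s →
      (s + 1 / τ) / Real.sqrt (s ^ 2 + s / τ) = (1 + 1 / (τ * s)) ^ ((1 : ℝ) / 2) := by
    intro s hs
    rw [key s hs]
    have h1 : 1 + 1 / (τ * s) = (s + c) / s := by
      rw [hc_def]; field_simp
    rw [h1, ← Real.sqrt_eq_rpow, Real.sqrt_div (by linarith : (0:ℝ) ≤ s + c)]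
  have hU : UniqueDiffOn ℝ (Set.Ioi (0:ℝ)) := uniqueDiffOn_Ioi 0
  have hEqOn : Set.EqOn (fun s => (s + 1 / τ) / Real.sqrt (s ^ 2 + s / τ)) (Ffun c)
      (Set.Ioi 0) := by
    intro s hs
    have hs0 : (0:ℝ) < s := hs
    simp only
    rw [key s hs0, Ffun_eq hc hs0]
  refine ⟨part1, ?_, ?_⟩
  · exact (contDiffOn_Ffun hc.le).congr hEqOn
  · intro n x hx
    have hx0 : (0:ℝ) < x := hx
    rw [iteratedDerivWithin_congr hEqOn hx]
    cases n with
    | zero =>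
      simp only [iteratedDerivWithin_zero, pow_zero, one_mul]
      rw [Ffun_eq hc hx0]
      positivity
    | succ n =>
      rw [iteratedDerivWithin_succ']
      have hEq : Set.EqOn (derivWithin (Ffun c) (Set.Ioi 0))
          (fun y => -(c/2 * gfun c (3/2) (1/2) y)) (Set.Ioi 0) := by
        intro y hy
        exact ((hasDerivAt_Ffun hc.le y hy).hasDerivWithinAt).derivWithin
          (hU.uniqueDiffWithinAt hy)
      rw [iteratedDerivWithin_congr hEq hx]
      rw [iteratedDerivWithin_fun_neg]
      rw [iteratedDerivWithin_const_mul hx hU (c/2)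
        ((contDiffOn_gfun hc.le (3/2) (1/2)).of_le (by exact_mod_cast le_top) x hx)]
      have hsg := sign_gfun hc.le n (3/2) (1/2) (by norm_num) (by norm_num) x hx
      have : (-1:ℝ)^(n+1) * -(c/2 * iteratedDerivWithin n (gfun c (3/2) (1/2)) (Set.Ioi 0) x)
          = c/2 * ((-1:ℝ)^n * iteratedDerivWithin n (gfun c (3/2) (1/2)) (Set.Ioi 0) x) := by
        rw [pow_succ]; ring
      rw [this]
      exact mul_nonneg (by positivity) hsg
end
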